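/- arXiv:math/0611615 — 3 statements merged into one kernel-verified Lean document; each statement's English description precedes it below -/
import Mathlib

section
/- Let G₁ and G₂ be nontrivial groups. Set K₁ = ℤ (written multiplicatively), K₂ = K₁ ≀ G₁ and K₃ = K₂ ≀ G₂. Inside K₃, let H₂ = {(f, 1_{G₂}) : f ∈ B(K₂,G₂)} (the base group of the outer wreath product) and let H₁ = {(f, 1_{G₂}) : f ∈ B(K₂,G₂) and f(1_{G₂}) ∈ B(K₁,G₁) × {1_{G₁}}} (those f whose value at 1_{G₂} lies in the base group of K₂). Then: (i) H₁ is a normal subgroup of H₂ and H₂/H₁ is isomorphic to G₁; (ii) H₂ is a normal subgroup of K₃ and K₃/H₂ is isomorphic to G₂; (iii) N_{K₃}(H₁) = H₂; (iv) N_{K₃}(H₂) = K₃. -/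
/-! `H₂` is the kernel of the projection `K₃ → G₂`, and `H₁` is the kernel of the homomorphism
`H₂ → G₁` sending `(f, 1)` to the `G₁`-coordinate of `f(1)`; this gives (i), (ii) and (iv).
For (iii), if `w = (f, g)` with `g ≠ 1`, conjugation by `w` moves the value at `g⁻¹` of an
element of `H₂` to the coordinate `1`, so an element of `H₁` whose value at `g⁻¹` has nontrivial
`G₁`-coordinate is conjugated out of `H₁`. -/

open scoped Classical

/-- The base group `B(K,G)` of the restricted wreath product: finitely supported
functions `G → K` under pointwise multiplication. -/
def baseGroup (K G : Type) [Group K] [Group G] : Subgroup (G → K) where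
  carrier := {f | (Function.mulSupport f).Finite}
  one_mem' := by
    show (Function.mulSupport (1 : G → K)).Finite
    exact Set.finite_empty.subset (fun x hx => (hx rfl).elim)
  mul_mem' := by
    intro f g hf hg
    show (Function.mulSupport (f * g)).Finite
    exact ((Set.Finite.union hf hg).subset (Function.mulSupport_mul f g))
  inv_mem' := by
    intro f hf
    show (Function.mulSupport (f⁻¹ : G → K)).Finite
    simpa [Function.mulSupport_inv] using hf

lemma mem_baseGroup_iff {K G : Type} [Group K] [Group G] (f : G → K) :
    f ∈ baseGroup K G ↔ (Function.mulSupport f).Finite := Iff.rfl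

variable (K G : Type) [Group K] [Group G]

/-- Left-translation of a finitely supported function. -/
def shiftEquiv (g : G) : baseGroup K G ≃* baseGroup K G where
  toFun f := ⟨fun x => (f : G → K) (g⁻¹ * x), by
    rw [mem_baseGroup_iff]
    have hf : (Function.mulSupport (f : G → K)).Finite := f.2
    refine (hf.image (fun y => g * y)).subset ?_
    intro x hx
    exact ⟨g⁻¹ * x, hx, by group⟩⟩
  invFun f := ⟨fun x => (f : G → K) (g * x), by
    rw [mem_baseGroup_iff]
    have hf : (Function.mulSupport (f : G → K)).Finite := f.2
    refine (hf.image (fun y => g⁻¹ * y)).subset ?_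
    intro x hx
    exact ⟨g * x, hx, by group⟩⟩
  left_inv f := by
    ext x
    simp
  right_inv f := by
    ext x
    simp
  map_mul' f₁ f₂ := by
    ext x
    rfl

/-- The left-translation action of `G` on `B(K,G)` as a homomorphism into automorphisms. -/
def shiftHom : G →* MulAut (baseGroup K G) where
  toFun := shiftEquiv K G
  map_one' := by
    ext f x
    simp [shiftEquiv]
  map_mul' g₁ g₂ := by
    ext f x
    simp [shiftEquiv, mul_assoc]

/-- The restricted wreath product `K ≀ G`. -/
abbrev wreath := (baseGroup K G) ⋊[shiftHom K G] G

/-- `ι(k) ∈ B(K,G)`: the function equal to `k` at `1` and `1` elsewhere. -/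
noncomputable def iota (k : K) : baseGroup K G :=
  ⟨fun x => if x = 1 then k else 1, by
    rw [mem_baseGroup_iff]
    refine (Set.finite_singleton (1 : G)).subset ?_
    intro x hx
    by_contra h
    exact hx (if_neg h)⟩

namespace wreath

variable {K G}

lemma left_mul_apply (a b : wreath K G) (x : G) :
    ((a * b).left : G → K) x = (a.left : G → K) x * (b.left : G → K) (a.right⁻¹ * x) := rfl

lemma left_inv_apply (a : wreath K G) (x : G) :
    ((a⁻¹).left : G → K) x = ((a.left : G → K) (a.right * x))⁻¹ := by
  rw [← inv_inv a.right]
  rfl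

lemma left_conj_apply (w h : wreath K G) (hh : h.right = 1) (x : G) :
    ((w * h * w⁻¹).left : G → K) x
      = (w.left : G → K) x * (h.left : G → K) (w.right⁻¹ * x) * ((w.left : G → K) x)⁻¹ := by
  rw [left_mul_apply, left_mul_apply, left_inv_apply, SemidirectProduct.mul_right, hh, mul_one,
    mul_inv_cancel_left]

abbrev base : Subgroup (wreath K G) := (SemidirectProduct.rightHom).ker

lemma mem_base {w : wreath K G} : w ∈ base ↔ w.right = 1 := Iff.rfl

def evalOne : (base : Subgroup (wreath K G)) →* K where
  toFun w := ((w : wreath K G).left : G → K) 1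
  map_one' := rfl
  map_mul' a b := by
    change (a.1.left : G → K) 1 * (b.1.left : G → K) (a.1.right⁻¹ * 1) = _
    rw [mem_base.mp a.2, inv_one, one_mul]

noncomputable def single (a : G) (k : K) : baseGroup K G :=
  ⟨Pi.mulSingle a k, (Set.finite_singleton a).subset Pi.mulSupport_mulSingle_subset⟩

lemma single_apply (a : G) (k : K) : (single a k : G → K) = Pi.mulSingle a k := rfl

lemma evalOne_surjective :
    Function.Surjective (evalOne : (base : Subgroup (wreath K G)) →* K) := fun k =>
  ⟨⟨SemidirectProduct.inl (iota K G k), SemidirectProduct.rightHom_inl _⟩, if_pos rfl⟩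

variable {Q : Type} [Group Q]

def kerAtOne (φ : K →* Q) : Subgroup (wreath K G) := (φ.comp evalOne).ker.map base.subtype

lemma mem_kerAtOne {φ : K →* Q} {w : wreath K G} :
    w ∈ kerAtOne φ ↔ w.right = 1 ∧ φ ((w.left : G → K) 1) = 1 := by
  constructor
  · rintro ⟨w, hw, rfl⟩
    exact ⟨w.2, hw⟩
  · rintro ⟨hw, hφ⟩
    exact ⟨⟨w, hw⟩, hφ, rfl⟩

lemma kerAtOne_le_base (φ : K →* Q) : kerAtOne φ ≤ (base : Subgroup (wreath K G)) :=
  Subgroup.map_subtype_le _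

lemma kerAtOne_subgroupOf_base (φ : K →* Q) :
    (kerAtOne φ).subgroupOf (base : Subgroup (wreath K G)) = (φ.comp evalOne).ker := by
  rw [kerAtOne, ← Subgroup.comap_subtype]
  exact Subgroup.comap_map_eq_self_of_injective base.subtype_injective _

instance normal_kerAtOne_subgroupOf_base (φ : K →* Q) :
    ((kerAtOne φ).subgroupOf (base : Subgroup (wreath K G))).Normal := by
  rw [kerAtOne_subgroupOf_base]
  exact MonoidHom.normal_ker _

lemma inl_single_mem_kerAtOne (φ : K →* Q) {a : G} (ha : a ≠ 1) (k : K) :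
    SemidirectProduct.inl (single a k) ∈ kerAtOne φ :=
  mem_kerAtOne.mpr ⟨rfl, by
    rw [SemidirectProduct.left_inl, single_apply, Pi.mulSingle_eq_of_ne ha.symm, map_one]⟩

lemma normalizer_kerAtOne {φ : K →* Q} (hφ : φ ≠ 1) :
    Subgroup.normalizer ((kerAtOne φ : Subgroup (wreath K G)) : Set (wreath K G)) = base := by
  refine le_antisymm (fun w hw => ?_)
    (Subgroup.le_normalizer_of_normal_subgroupOf (kerAtOne_le_base φ))
  by_contra hw_right
  have hne : w.right⁻¹ ≠ 1 := inv_ne_one.mpr hw_right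
  obtain ⟨k, hk⟩ := DFunLike.ne_iff.mp hφ
  have hconj := (Subgroup.mem_normalizer_iff.mp hw _).mp (inl_single_mem_kerAtOne φ hne k)
  rw [mem_kerAtOne, left_conj_apply _ _ rfl, mul_one, SemidirectProduct.left_inl, single_apply,
    Pi.mulSingle_eq_same, map_mul, map_mul, map_inv, conj_eq_one_iff] at hconj
  exact hk hconj.2

end wreath

theorem alpha_three_example_general (G₁ G₂ : Type) [Group G₁] [Group G₂]
    [Nontrivial G₁] :
    ∃ H₁ H₂ : Subgroup (wreath (wreath (Multiplicative ℤ) G₁) G₂),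
      (H₂ : Set (wreath (wreath (Multiplicative ℤ) G₁) G₂)) = {w | w.right = 1} ∧
      (H₁ : Set (wreath (wreath (Multiplicative ℤ) G₁) G₂)) =
        {w | w.right = 1 ∧ ((w.left : G₂ → wreath (Multiplicative ℤ) G₁) 1).right = 1} ∧
      -- (i) H₁ is normal in H₂ with H₂/H₁ ≅ G₁
      H₁ ≤ H₂ ∧ (H₁.subgroupOf H₂).Normal ∧
      (∃ φ : H₂ →* G₁, Function.Surjective φ ∧ φ.ker = H₁.subgroupOf H₂) ∧
      -- (ii) H₂ is normal in K₃ with K₃/H₂ ≅ G₂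
      H₂.Normal ∧
      (∃ ψ : wreath (wreath (Multiplicative ℤ) G₁) G₂ →* G₂,
        Function.Surjective ψ ∧ ψ.ker = H₂) ∧
      -- (iii) N_{K₃}(H₁) = H₂
      Subgroup.normalizer (H₁ : Set (wreath (wreath (Multiplicative ℤ) G₁) G₂)) = H₂ ∧
      -- (iv) N_{K₃}(H₂) = K₃
      Subgroup.normalizer (H₂ : Set (wreath (wreath (Multiplicative ℤ) G₁) G₂)) = ⊤ := by
  open SemidirectProduct wreath in
  obtain ⟨g, hg⟩ := exists_ne (1 : G₁)
  have rightHom_ne_one : (rightHom : wreath (Multiplicative ℤ) G₁ →* G₁) ≠ 1 := fun h =>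
    hg (DFunLike.congr_fun h (inr g))
  exact ⟨kerAtOne rightHom, base, rfl, Set.ext fun _ => mem_kerAtOne, kerAtOne_le_base _,
    inferInstance,
    ⟨rightHom.comp evalOne, rightHom_surjective.comp evalOne_surjective,
      (kerAtOne_subgroupOf_base _).symm⟩,
    inferInstance, ⟨rightHom, rightHom_surjective, rfl⟩, normalizer_kerAtOne rightHom_ne_one,
    Subgroup.normalizer_eq_top_iff.mpr inferInstance⟩

/-- With `K₁ = ℤ` (multiplicative), `K₂ = K₁ ≀ G₁`, `K₃ = K₂ ≀ G₂`,
`H₂` the base group of `K₃` and `H₁ ⊆ H₂` those `(f, 1)` with `f(1)` in the base group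
of `K₂`, we have: (i) `H₁ ⊴ H₂` with `H₂/H₁ ≅ G₁`; (ii) `H₂ ⊴ K₃` with `K₃/H₂ ≅ G₂`;
(iii) `N_{K₃}(H₁) = H₂`; (iv) `N_{K₃}(H₂) = K₃`.
The quotient isomorphisms are encoded as surjective homomorphisms with the
corresponding kernels. -/
theorem alpha_three_example (G₁ G₂ : Type) [Group G₁] [Group G₂]
    [Nontrivial G₁] [Nontrivial G₂] :
    ∃ H₁ H₂ : Subgroup (wreath (wreath (Multiplicative ℤ) G₁) G₂),
      (H₂ : Set (wreath (wreath (Multiplicative ℤ) G₁) G₂)) = {w | w.right = 1} ∧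
      (H₁ : Set (wreath (wreath (Multiplicative ℤ) G₁) G₂)) =
        {w | w.right = 1 ∧ ((w.left : G₂ → wreath (Multiplicative ℤ) G₁) 1).right = 1} ∧
      -- (i) H₁ is normal in H₂ with H₂/H₁ ≅ G₁
      H₁ ≤ H₂ ∧ (H₁.subgroupOf H₂).Normal ∧
      (∃ φ : H₂ →* G₁, Function.Surjective φ ∧ φ.ker = H₁.subgroupOf H₂) ∧
      -- (ii) H₂ is normal in K₃ with K₃/H₂ ≅ G₂
      H₂.Normal ∧
      (∃ ψ : wreath (wreath (Multiplicative ℤ) G₁) G₂ →* G₂,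
        Function.Surjective ψ ∧ ψ.ker = H₂) ∧
      -- (iii) N_{K₃}(H₁) = H₂
      Subgroup.normalizer (H₁ : Set (wreath (wreath (Multiplicative ℤ) G₁) G₂)) = H₂ ∧
      -- (iv) N_{K₃}(H₂) = K₃
      Subgroup.normalizer (H₂ : Set (wreath (wreath (Multiplicative ℤ) G₁) G₂)) = ⊤ :=
  alpha_three_example_general G₁ G₂
end

section
/- Let K and G be groups and let W = K ≀ G be the restricted wreath product. Let H be a subgroup of W such that (l, 1_G) ∈ H for every l ∈ L(K,G), and suppose there exists k ∈ K with (ι(k), 1_G) ∉ H. Then every element (f, g) of the normalizer N_W(H) satisfies g = 1_G. -/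
open scoped Classical

variable (K G : Type) [Group K] [Group G]

/-!
If `(f, g)` normalizes `H` with `g ≠ 1`, conjugate by it the element of `L(K,G)` supported at
`g⁻¹` with value `f(1)⁻¹ k f(1)`. The result lies in `H` and takes the value `k` at `1`, so it
agrees with `ι(k)` modulo `L(K,G) ⊆ H`, forcing `(ι(k), 1) ∈ H`.
-/

namespace SemidirectProduct

variable {N H : Type*} [Group N] [Group H] {φ : H →* MulAut N}

theorem mul_inl_mul_inv (w : N ⋊[φ] H) (n : N) :
    w * inl n * w⁻¹ = inl (w.left * φ w.right n * w.left⁻¹) := by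
  conv_lhs => rw [← inl_left_mul_inr_right w]
  simp only [mul_inv_rev, map_mul, map_inv, inl_aut, mul_assoc]

end SemidirectProduct

variable {K G}

open SemidirectProduct

theorem shiftHom_apply_coe (g : G) (f : baseGroup K G) (x : G) :
    (shiftHom K G g f : G → K) x = (f : G → K) (g⁻¹ * x) := rfl

noncomputable def mulSingleBase (a : G) (k : K) : baseGroup K G :=
  ⟨Pi.mulSingle a k, (Set.finite_singleton a).subset Pi.mulSupport_mulSingle_subset⟩

theorem left_mul_shiftHom_mul_inv_apply_one (w : wreath K G) (l : baseGroup K G) :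
    ((w.left * shiftHom K G w.right l * w.left⁻¹ : baseGroup K G) : G → K) 1 =
      (w.left : G → K) 1 * (l : G → K) w.right⁻¹ * ((w.left : G → K) 1)⁻¹ := by
  simp [shiftHom_apply_coe]

/-- Modulo `L(K,G)`, membership of a base element is decided by its value at `1`. -/
theorem inl_mem_iff_of_apply_one_eq {H : Subgroup (wreath K G)}
    (hL : ∀ l : baseGroup K G, (l : G → K) 1 = 1 → inl l ∈ H)
    {m m' : baseGroup K G} (h : (m : G → K) 1 = (m' : G → K) 1) :
    inl m ∈ H ↔ inl m' ∈ H := by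
  have hquot : inl (m⁻¹ * m') ∈ H := hL _ (by simp [h])
  constructor
  · intro hm
    simpa using H.mul_mem hm hquot
  · intro hm'
    simpa using H.mul_mem hm' (H.inv_mem hquot)

/-- If a subgroup `H` of `W = K ≀ G` contains `(l, 1)` for every
`l ∈ L(K,G)` but misses `(ι(k), 1)` for some `k ∈ K`, then every element of the
normalizer of `H` in `W` has trivial `G`-component. -/
theorem normalizer_right_eq_one (K G : Type) [Group K] [Group G]
    (H : Subgroup (wreath K G))
    (hL : ∀ l : baseGroup K G, (l : G → K) 1 = 1 → (⟨l, 1⟩ : wreath K G) ∈ H)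
    (k : K) (hk : (⟨iota K G k, 1⟩ : wreath K G) ∉ H) :
    ∀ w : wreath K G, w ∈ Subgroup.normalizer (H : Set (wreath K G)) → w.right = 1 := by
  intro w hw
  by_contra hg
  set c := (w.left : G → K) 1
  set l := mulSingleBase w.right⁻¹ (c⁻¹ * k * c)
  have hl : inl l ∈ H := hL l (Pi.mulSingle_eq_of_ne' (inv_ne_one.mpr hg) _)
  have hconj : inl (w.left * shiftHom K G w.right l * w.left⁻¹) ∈ H := by
    rw [← mul_inl_mul_inv]
    exact (Subgroup.mem_normalizer_iff.mp hw _).mp hl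
  refine hk ((inl_mem_iff_of_apply_one_eq hL ?_).mp hconj)
  rw [left_mul_shiftHom_mul_inv_apply_one]
  simp only [l, mulSingleBase, Pi.mulSingle_eq_same, c, iota, if_pos]
  group
end

section
/- Assume the crossed product setting: N is a II₁ factor on 𝓗 and θ is a properly outer action of the countable discrete group K on N. Let 𝒜 ⊆ B(ℓ²(K,𝓗)) be the set of operators T for which there exist x ∈ N and z ∈ N' such that (Tξ)(k) = z(θ_k(x)(ξ(k))) for all ξ ∈ ℓ²(K,𝓗) and k ∈ K. Then the double commutant 𝒜'' equals the set of all bounded operators T on ℓ²(K,𝓗) for which there exists a uniformly bounded family (X_k)_{k∈K} in B(𝓗) (i.e. sup_k ‖X_k‖ < ∞) with (Tξ)(k) = X_k(ξ(k)) for all ξ ∈ ℓ²(K,𝓗) and k ∈ K. -/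
noncomputable section

variable {𝓗 : Type} [NormedAddCommGroup 𝓗] [InnerProductSpace ℂ 𝓗] [CompleteSpace 𝓗]
variable {K : Type} [Group K]

/-- `N` is a factor: its intersection with its commutant consists of the scalars. -/
def IsFactor (N : VonNeumannAlgebra 𝓗) : Prop :=
  (N : Set (𝓗 →L[ℂ] 𝓗)) ∩ Set.centralizer (N : Set (𝓗 →L[ℂ] 𝓗)) =
    Set.range (fun z : ℂ => z • (1 : 𝓗 →L[ℂ] 𝓗))

/-- `N` is finite: every isometry in `N` is a unitary. -/
def IsFiniteVNA (N : VonNeumannAlgebra 𝓗) : Prop :=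
  ∀ v ∈ N, star v * v = 1 → v * star v = 1

/-- `N` is infinite-dimensional as a complex vector space. -/
def IsInfiniteDimensionalVNA (N : VonNeumannAlgebra 𝓗) : Prop :=
  ¬ ∃ s : Finset (𝓗 →L[ℂ] 𝓗),
      (N : Set (𝓗 →L[ℂ] 𝓗)) ⊆ (Submodule.span ℂ (s : Set (𝓗 →L[ℂ] 𝓗)) : Set (𝓗 →L[ℂ] 𝓗))

/-- `N` is a II₁ factor: an infinite-dimensional finite factor. -/
def IsIIOneFactor (N : VonNeumannAlgebra 𝓗) : Prop :=
  IsFactor N ∧ IsFiniteVNA N ∧ IsInfiniteDimensionalVNA N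

/-- `θ` is an action of `K` on `N` by *-automorphisms (recorded on the ambient
algebra `B(𝓗)`, with all requirements imposed on elements of `N`). -/
def IsStarAction (N : VonNeumannAlgebra 𝓗) (θ : K → (𝓗 →L[ℂ] 𝓗) → (𝓗 →L[ℂ] 𝓗)) : Prop :=
  (∀ k : K, ∀ x ∈ N, θ k x ∈ N) ∧
  (∀ x ∈ N, θ 1 x = x) ∧
  (∀ g k : K, ∀ x ∈ N, θ (g * k) x = θ g (θ k x)) ∧
  (∀ k : K, ∀ x ∈ N, ∀ y ∈ N, θ k (x + y) = θ k x + θ k y) ∧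
  (∀ (k : K) (c : ℂ), ∀ x ∈ N, θ k (c • x) = c • θ k x) ∧
  (∀ k : K, ∀ x ∈ N, ∀ y ∈ N, θ k (x * y) = θ k x * θ k y) ∧
  (∀ k : K, ∀ x ∈ N, θ k (star x) = star (θ k x))

/-- `θ` is properly outer: for `k ≠ 1` only `x = 0` in `N` satisfies
`x y = θ_k(y) x` for all `y ∈ N`. -/
def IsProperlyOuter (N : VonNeumannAlgebra 𝓗) (θ : K → (𝓗 →L[ℂ] 𝓗) → (𝓗 →L[ℂ] 𝓗)) : Prop :=
  ∀ k : K, k ≠ 1 → ∀ x ∈ N, (∀ y ∈ N, x * y = θ k y * x) → x = 0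

/-- The operators `π(x)`, `x ∈ N`, on `ℓ²(K,𝓗)`: `(π(x)ξ)(g) = θ_{g⁻¹}(x)(ξ(g))`. -/
def piSet (N : VonNeumannAlgebra 𝓗) (θ : K → (𝓗 →L[ℂ] 𝓗) → (𝓗 →L[ℂ] 𝓗)) :
    Set (lp (fun _ : K => 𝓗) 2 →L[ℂ] lp (fun _ : K => 𝓗) 2) :=
  {T | ∃ x ∈ N, ∀ (ξ : lp (fun _ : K => 𝓗) 2) (g : K), (T ξ) g = θ g⁻¹ x (ξ g)}

/-- The unitaries `λ_k`, `k ∈ S`, on `ℓ²(K,𝓗)`: `(λ_kξ)(g) = ξ(k⁻¹g)`. -/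
def lambdaSet (S : Set K) :
    Set (lp (fun _ : K => 𝓗) 2 →L[ℂ] lp (fun _ : K => 𝓗) 2) :=
  {T | ∃ k ∈ S, ∀ (ξ : lp (fun _ : K => 𝓗) 2) (g : K), (T ξ) g = ξ (k⁻¹ * g)}

/-- The crossed product `N ⋊_θ S`: the von Neumann algebra (double commutant) generated
by the `π(x)` for `x ∈ N` together with the `λ_k` for `k ∈ S`. -/
def crossedProduct (N : VonNeumannAlgebra 𝓗) (θ : K → (𝓗 →L[ℂ] 𝓗) → (𝓗 →L[ℂ] 𝓗))
    (S : Set K) : Set (lp (fun _ : K => 𝓗) 2 →L[ℂ] lp (fun _ : K => 𝓗) 2) :=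
  Set.centralizer (Set.centralizer (piSet N θ ∪ lambdaSet S))

/-!
Write an operator `S` on `ℓ²(K, 𝓗) = ⨁ₖ 𝓗` as a matrix `(S_{ij})` over `B(𝓗)`. If `S`
commutes with the diagonal operator `(z θₖ(x))ₖ`, then `z θᵢ(x) S_{ij} = S_{ij} z θⱼ(x)`.
Taking `x = 1` puts `S_{ij}` in `N'' = N`; taking `z = 1` makes `S_{ij}` intertwine `θ_{ij⁻¹}`
with the identity, so `S_{ij} = 0` for `i ≠ j` by proper outerness; and `S_{kk} ∈ N ∩ N' = ℂ`.
Thus `𝒜'` consists of diagonal operators with scalar entries, which commute with every bounded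
diagonal operator. Conversely, `𝒜'` contains the coordinate projections, and an operator
commuting with all of them is diagonal.
-/

open scoped ENNReal

namespace lp

variable {𝕜 : Type*} [NontriviallyNormedField 𝕜] {E : Type*} [NormedAddCommGroup E]
  [NormedSpace 𝕜 E] {ι : Type*} {p : ℝ≥0∞} [Fact (1 ≤ p)]

def IsDiagonalWith (T : lp (fun _ : ι => E) p →L[𝕜] lp (fun _ : ι => E) p)
    (X : ι → E →L[𝕜] E) : Prop :=
  ∀ ξ i, T ξ i = X i (ξ i)

theorem exists_isDiagonalWith (X : ι → E →L[𝕜] E) (hX : ∃ C, ∀ i, ‖X i‖ ≤ C) :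
    ∃ T : lp (fun _ : ι => E) p →L[𝕜] lp (fun _ : ι => E) p, IsDiagonalWith T X := by
  obtain ⟨C, hC⟩ := hX
  obtain ⟨c, hc⟩ := NormedField.exists_lt_norm 𝕜 C
  have hp : p ≠ 0 := (zero_lt_one.trans_le Fact.out).ne'
  have hle (ξ : lp (fun _ : ι => E) p) (i : ι) : ‖X i (ξ i)‖ ≤ ‖(c • ξ) i‖ := by
    rw [coeFn_smul, Pi.smul_apply, norm_smul]
    exact ((X i).le_opNorm _).trans (by gcongr; exact (hC i).trans hc.le)
  let F : lp (fun _ : ι => E) p →ₗ[𝕜] lp (fun _ : ι => E) p :=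
    { toFun := fun ξ => ⟨fun i => X i (ξ i), (lp.memℓp (c • ξ)).mono' (hle ξ)⟩
      map_add' := fun ξ η => lp.ext <| funext fun i => map_add (X i) (ξ i) (η i)
      map_smul' := fun a ξ => lp.ext <| funext fun i => map_smul (X i) a (ξ i) }
  refine ⟨F.mkContinuous ‖c‖ fun ξ => ?_, fun ξ i => rfl⟩
  calc ‖F ξ‖ ≤ ‖c • ξ‖ := norm_mono hp (hle ξ)
    _ = ‖c‖ * ‖ξ‖ := norm_const_smul hp ξ

theorem IsDiagonalWith.commute {T S : lp (fun _ : ι => E) p →L[𝕜] lp (fun _ : ι => E) p}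
    {X Y : ι → E →L[𝕜] E} (hT : IsDiagonalWith T X) (hS : IsDiagonalWith S Y)
    (hXY : ∀ i, Commute (X i) (Y i)) : Commute T S :=
  ContinuousLinearMap.ext fun ξ => lp.ext <| funext fun i => by
    change T (S ξ) i = S (T ξ) i
    rw [hT, hS, hS, hT]
    exact congr($(hXY i) (ξ i))

variable [DecidableEq ι]

def matrixEntry (T : lp (fun _ : ι => E) p →L[𝕜] lp (fun _ : ι => E) p) (i j : ι) :
    E →L[𝕜] E :=
  evalCLM 𝕜 (fun _ : ι => E) p i ∘L T ∘L singleContinuousLinearMap 𝕜 (fun _ : ι => E) p j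

@[simp]
theorem matrixEntry_apply (T : lp (fun _ : ι => E) p →L[𝕜] lp (fun _ : ι => E) p)
    (i j : ι) (v : E) : matrixEntry T i j v = T (lp.single p j v) i :=
  rfl

theorem norm_matrixEntry_le (T : lp (fun _ : ι => E) p →L[𝕜] lp (fun _ : ι => E) p)
    (i j : ι) : ‖matrixEntry T i j‖ ≤ ‖T‖ := by
  have hp : 0 < p := zero_lt_one.trans_le Fact.out
  refine ContinuousLinearMap.opNorm_le_bound _ (norm_nonneg T) fun v => ?_
  rw [matrixEntry_apply]
  calc ‖T (lp.single p j v) i‖ ≤ ‖T (lp.single p j v)‖ := norm_apply_le_norm hp.ne' _ i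
    _ ≤ ‖T‖ * ‖lp.single (E := fun _ : ι => E) p j v‖ := T.le_opNorm _
    _ = ‖T‖ * ‖v‖ := by rw [lp.norm_single hp]

theorem IsDiagonalWith.apply_single {T : lp (fun _ : ι => E) p →L[𝕜] lp (fun _ : ι => E) p}
    {X : ι → E →L[𝕜] E} (hT : IsDiagonalWith T X) (j : ι) (v : E) :
    T (lp.single p j v) = lp.single p j (X j v) := by
  refine lp.ext <| funext fun i => ?_
  rw [hT]
  rcases eq_or_ne i j with rfl | hij
  · rw [lp.single_apply_self, lp.single_apply_self]
  · rw [lp.single_apply_ne _ _ _ hij, lp.single_apply_ne _ _ _ hij, map_zero]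

theorem IsDiagonalWith.mul_matrixEntry
    {T S : lp (fun _ : ι => E) p →L[𝕜] lp (fun _ : ι => E) p} {X : ι → E →L[𝕜] E}
    (hT : IsDiagonalWith T X) (hTS : Commute T S) (i j : ι) :
    X i * matrixEntry S i j = matrixEntry S i j * X j :=
  ContinuousLinearMap.ext fun v => by
    change X i (S (lp.single p j v) i) = S (lp.single p j (X j v)) i
    rw [← hT, ← hT.apply_single]
    exact congr($hTS (lp.single p j v) i)

theorem IsDiagonalWith.commute_of_single
    {T A : lp (fun _ : ι => E) p →L[𝕜] lp (fun _ : ι => E) p} {X : ι → E →L[𝕜] E} {k : ι}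
    (hT : IsDiagonalWith T (Pi.single k 1)) (hA : IsDiagonalWith A X) : Commute A T :=
  hA.commute hT fun i => by
    rcases eq_or_ne i k with rfl | hik
    · simp only [Pi.single_eq_same, Commute.one_right]
    · simp only [Pi.single_eq_of_ne hik, Commute.zero_right]

theorem matrixEntry_eq_zero_of_commute_single
    {T S : lp (fun _ : ι => E) p →L[𝕜] lp (fun _ : ι => E) p} {i j : ι}
    (hT : IsDiagonalWith T (Pi.single i 1)) (hTS : Commute T S) (hij : i ≠ j) :
    matrixEntry S i j = 0 := by
  simpa [Pi.single_eq_of_ne hij.symm] using hT.mul_matrixEntry hTS i j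

theorem isDiagonalWith_matrixEntry (hp : p ≠ ⊤)
    {S : lp (fun _ : ι => E) p →L[𝕜] lp (fun _ : ι => E) p}
    (hS : ∀ i j, i ≠ j → matrixEntry S i j = 0) :
    IsDiagonalWith S fun i => matrixEntry S i i := by
  intro ξ i
  have hsum : HasSum (fun j => matrixEntry S i j (ξ j)) (S ξ i) :=
    (lp.hasSum_single hp ξ).mapL (evalCLM 𝕜 (fun _ : ι => E) p i ∘L S)
  exact hsum.unique <| hasSum_single i fun j hji => by rw [hS i j hji.symm, zero_apply]

theorem isDiagonalWith_matrixEntry_of_commute (hp : p ≠ ⊤)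
    {S : lp (fun _ : ι => E) p →L[𝕜] lp (fun _ : ι => E) p}
    (hS : ∀ i T, IsDiagonalWith T (Pi.single i 1) → Commute T S) :
    IsDiagonalWith S fun i => matrixEntry S i i := by
  refine isDiagonalWith_matrixEntry hp fun i j hij => ?_
  have hbound (k : ι) : ‖Pi.single (M := fun _ => E →L[𝕜] E) i 1 k‖ ≤ 1 :=
    ContinuousLinearMap.opNorm_le_bound _ zero_le_one fun v => by
      rcases eq_or_ne k i with rfl | hki <;> simp [Pi.single_eq_of_ne, *]
  obtain ⟨T, hT⟩ := exists_isDiagonalWith (p := p) _ ⟨1, hbound⟩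
  exact matrixEntry_eq_zero_of_commute_single hT (hS i T hT) hij

end lp

instance VonNeumannAlgebra.isClosed (N : VonNeumannAlgebra 𝓗) :
    IsClosed (N.toStarSubalgebra : Set (𝓗 →L[ℂ] 𝓗)) := by
  rw [N.coe_toStarSubalgebra, ← N.centralizer_centralizer]
  exact Set.isClosed_centralizer _

namespace IsStarAction

variable {N : VonNeumannAlgebra 𝓗} {θ : K → (𝓗 →L[ℂ] 𝓗) → (𝓗 →L[ℂ] 𝓗)}

theorem apply_apply_inv (hθ : IsStarAction N θ) (k : K) {y : 𝓗 →L[ℂ] 𝓗} (hy : y ∈ N) :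
    θ k (θ k⁻¹ y) = y := by
  rw [← hθ.2.2.1 k k⁻¹ y hy, mul_inv_cancel, hθ.2.1 y hy]

theorem map_one (hθ : IsStarAction N θ) (k : K) : θ k 1 = 1 := by
  have h := hθ.2.2.2.2.2.1 k 1 N.one_mem (θ k⁻¹ 1) (hθ.1 k⁻¹ 1 N.one_mem)
  rwa [one_mul, hθ.apply_apply_inv k N.one_mem, mul_one, eq_comm] at h

def toNonUnitalStarAlgHom (hθ : IsStarAction N θ) (k : K) :
    N.toStarSubalgebra →⋆ₙₐ[ℂ] N.toStarSubalgebra where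
  toFun x := ⟨θ k x, hθ.1 k x x.2⟩
  map_zero' := Subtype.ext <| by
    simpa using hθ.2.2.2.2.1 k 0 0 N.zero_mem
  map_add' x y := Subtype.ext <| hθ.2.2.2.1 k x x.2 y y.2
  map_smul' c x := Subtype.ext <| hθ.2.2.2.2.1 k c x x.2
  map_mul' x y := Subtype.ext <| hθ.2.2.2.2.2.1 k x x.2 y y.2
  map_star' x := Subtype.ext <| hθ.2.2.2.2.2.2 k x x.2

theorem norm_apply_le (hθ : IsStarAction N θ) (k : K) {x : 𝓗 →L[ℂ] 𝓗} (hx : x ∈ N) :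
    ‖θ k x‖ ≤ ‖x‖ := by
  exact NonUnitalStarAlgHom.norm_apply_le (hθ.toNonUnitalStarAlgHom k) ⟨x, hx⟩

end IsStarAction

open lp

/-- The set `𝒜` of the theorem. -/
def twistedDiagonalSet (N : VonNeumannAlgebra 𝓗) (θ : K → (𝓗 →L[ℂ] 𝓗) → (𝓗 →L[ℂ] 𝓗)) :
    Set (lp (fun _ : K => 𝓗) 2 →L[ℂ] lp (fun _ : K => 𝓗) 2) :=
  {T | ∃ x ∈ N, ∃ z ∈ Set.centralizer (N : Set (𝓗 →L[ℂ] 𝓗)),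
    IsDiagonalWith T fun k => z * θ k x}

section Commutant

variable {N : VonNeumannAlgebra 𝓗} {θ : K → (𝓗 →L[ℂ] 𝓗) → (𝓗 →L[ℂ] 𝓗)} [DecidableEq K]
  {S : lp (fun _ : K => 𝓗) 2 →L[ℂ] lp (fun _ : K => 𝓗) 2}

theorem mul_matrixEntry_of_mem_centralizer (hθ : IsStarAction N θ)
    (hS : S ∈ Set.centralizer (twistedDiagonalSet N θ)) {x z : 𝓗 →L[ℂ] 𝓗} (hx : x ∈ N)
    (hz : z ∈ Set.centralizer (N : Set (𝓗 →L[ℂ] 𝓗))) (i j : K) :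
    z * θ i x * matrixEntry S i j = matrixEntry S i j * (z * θ j x) := by
  obtain ⟨T, hT⟩ := exists_isDiagonalWith (p := 2) (fun k => z * θ k x)
    ⟨‖z‖ * ‖x‖, fun k => (norm_mul_le _ _).trans (by gcongr; exact hθ.norm_apply_le k hx)⟩
  exact hT.mul_matrixEntry (hS T ⟨x, hx, z, hz, hT⟩) i j

theorem matrixEntry_mem_of_mem_centralizer (hθ : IsStarAction N θ)
    (hS : S ∈ Set.centralizer (twistedDiagonalSet N θ)) (i j : K) : matrixEntry S i j ∈ N := by
  rw [← SetLike.mem_coe, ← N.centralizer_centralizer]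
  intro z hz
  simpa [hθ.map_one] using mul_matrixEntry_of_mem_centralizer hθ hS N.one_mem hz i j

theorem matrixEntry_self_mem_centralizer (hθ : IsStarAction N θ)
    (hS : S ∈ Set.centralizer (twistedDiagonalSet N θ)) (k : K) :
    matrixEntry S k k ∈ Set.centralizer (N : Set (𝓗 →L[ℂ] 𝓗)) := by
  intro y hy
  simpa [hθ.apply_apply_inv k hy] using
    mul_matrixEntry_of_mem_centralizer hθ hS (hθ.1 k⁻¹ y hy) Set.one_mem_centralizer k k

theorem matrixEntry_eq_zero_of_mem_centralizer (hθ : IsStarAction N θ)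
    (hout : IsProperlyOuter N θ) (hS : S ∈ Set.centralizer (twistedDiagonalSet N θ)) {i j : K}
    (hij : i ≠ j) : matrixEntry S i j = 0 := by
  refine hout (i * j⁻¹) (mul_inv_eq_one.not.mpr hij) _
    (matrixEntry_mem_of_mem_centralizer hθ hS i j) fun y hy => ?_
  have h := mul_matrixEntry_of_mem_centralizer hθ hS (hθ.1 j⁻¹ y hy) Set.one_mem_centralizer i j
  rw [one_mul, one_mul, hθ.apply_apply_inv j hy, ← hθ.2.2.1 i j⁻¹ y hy] at h
  exact h.symm

theorem exists_isDiagonalWith_smul_one_of_mem_centralizer (hN : IsFactor N)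
    (hθ : IsStarAction N θ) (hout : IsProperlyOuter N θ)
    (hS : S ∈ Set.centralizer (twistedDiagonalSet N θ)) :
    ∃ c : K → ℂ, IsDiagonalWith S fun k => c k • 1 := by
  have hdiag := isDiagonalWith_matrixEntry ENNReal.ofNat_ne_top fun _ _ =>
    matrixEntry_eq_zero_of_mem_centralizer hθ hout hS
  choose c hc using fun k => (Set.ext_iff.mp hN (matrixEntry S k k)).mp
    ⟨matrixEntry_mem_of_mem_centralizer hθ hS k k, matrixEntry_self_mem_centralizer hθ hS k⟩
  exact ⟨c, fun ξ k => (hdiag ξ k).trans (congrArg (· (ξ k)) (hc k).symm)⟩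

end Commutant

theorem double_commutant_of_diagonal_algebra_general
    (N : VonNeumannAlgebra 𝓗)
    (hN : IsIIOneFactor N)
    (θ : K → (𝓗 →L[ℂ] 𝓗) → (𝓗 →L[ℂ] 𝓗))
    (hθ : IsStarAction N θ) (hout : IsProperlyOuter N θ) :
    Set.centralizer (Set.centralizer
      {T : lp (fun _ : K => 𝓗) 2 →L[ℂ] lp (fun _ : K => 𝓗) 2 |
        ∃ x ∈ N, ∃ z ∈ Set.centralizer (N : Set (𝓗 →L[ℂ] 𝓗)),
          ∀ (ξ : lp (fun _ : K => 𝓗) 2) (k : K), (T ξ) k = z (θ k x (ξ k))})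
    = {T : lp (fun _ : K => 𝓗) 2 →L[ℂ] lp (fun _ : K => 𝓗) 2 |
        ∃ X : K → (𝓗 →L[ℂ] 𝓗), (∃ C : ℝ, ∀ k : K, ‖X k‖ ≤ C) ∧
          ∀ (ξ : lp (fun _ : K => 𝓗) 2) (k : K), (T ξ) k = X k (ξ k)} := by
  classical
  change Set.centralizer (Set.centralizer (twistedDiagonalSet N θ)) =
    {T | ∃ X : K → (𝓗 →L[ℂ] 𝓗), (∃ C : ℝ, ∀ k, ‖X k‖ ≤ C) ∧ IsDiagonalWith T X}
  ext S
  constructor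
  · intro hS
    refine ⟨fun k => matrixEntry S k k, ⟨‖S‖, fun k => norm_matrixEntry_le S k k⟩, ?_⟩
    refine isDiagonalWith_matrixEntry_of_commute ENNReal.ofNat_ne_top fun k T hT => hS T ?_
    rintro A ⟨x, -, z, -, hA⟩
    exact hT.commute_of_single hA
  · rintro ⟨X, -, hX⟩ S' hS'
    obtain ⟨c, hc⟩ := exists_isDiagonalWith_smul_one_of_mem_centralizer hN.1 hθ hout hS'
    exact hc.commute hX fun k => (Commute.one_left _).smul_left _

/-- if `𝒜` is the set of operators on `ℓ²(K,𝓗)` of the form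
`(Tξ)(k) = z(θ_k(x)(ξ(k)))` with `x ∈ N` and `z ∈ N'`, then `𝒜''` is exactly the set of
"diagonal" operators `(Tξ)(k) = X_k(ξ(k))` for uniformly bounded families
`(X_k)_{k ∈ K}` in `B(𝓗)`. -/
theorem double_commutant_of_diagonal_algebra
    (N : VonNeumannAlgebra 𝓗) [Countable K]
    (hN : IsIIOneFactor N)
    (θ : K → (𝓗 →L[ℂ] 𝓗) → (𝓗 →L[ℂ] 𝓗))
    (hθ : IsStarAction N θ) (hout : IsProperlyOuter N θ) :
    Set.centralizer (Set.centralizer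
      {T : lp (fun _ : K => 𝓗) 2 →L[ℂ] lp (fun _ : K => 𝓗) 2 |
        ∃ x ∈ N, ∃ z ∈ Set.centralizer (N : Set (𝓗 →L[ℂ] 𝓗)),
          ∀ (ξ : lp (fun _ : K => 𝓗) 2) (k : K), (T ξ) k = z (θ k x (ξ k))})
    = {T : lp (fun _ : K => 𝓗) 2 →L[ℂ] lp (fun _ : K => 𝓗) 2 |
        ∃ X : K → (𝓗 →L[ℂ] 𝓗), (∃ C : ℝ, ∀ k : K, ‖X k‖ ≤ C) ∧
          ∀ (ξ : lp (fun _ : K => 𝓗) 2) (k : K), (T ξ) k = X k (ξ k)} :=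
  double_commutant_of_diagonal_algebra_general N hN θ hθ hout
end
end
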